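/- Let n ≥ 5 and let λ = (λ_1 ≥ … ≥ λ_n) be either a nonzero integer partition of length n or a half-partition of length n (all entries in ℕ + 1/2). Then ∑_{i=1}^n (λ_i² + (2n−2i)·λ_i) ≥ 2n−1, with equality if and only if λ = (1,0,…,0). In particular, the half-partition (1/2,…,1/2) gives the value n(2n−1)/4, which is strictly larger than 2n−1 for n ≥ 5. -/

import Mathlib

/-!
Every summand `λᵢ² + (2n - 2i)λᵢ` is increasing in `λᵢ ≥ 0`. For a nonzero partition the first
entry is at least `1`, so the first summand alone is at least `1 + (2n - 2) = 2n - 1` while the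
others are nonnegative; equality forces `λ₁ = 1` and all other entries to vanish. A half-partition
dominates `(1/2, …, 1/2)` entrywise, whose sum `n(2n - 1)/4` already exceeds `2n - 1` once `n ≥ 5`.
-/

open Finset

/-- The paper's coefficient `2n - 2i`, for the `0`-based index `i : Fin n`. -/
def casimirWeight (n : ℕ) (i : Fin n) : ℝ := 2 * (n : ℝ) - 2 * (((i : ℕ) : ℝ) + 1)

def casimirSum (n : ℕ) (lam : Fin n → ℝ) : ℝ :=
  ∑ i : Fin n, (lam i ^ 2 + casimirWeight n i * lam i)

def standardPartition (n : ℕ) : Fin n → ℝ := fun i => if (i : ℕ) = 0 then 1 else 0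

theorem strictMonoOn_sq_add_mul {R : Type*} [CommRing R] [LinearOrder R] [IsStrictOrderedRing R]
    {c : R} (hc : 0 ≤ c) : StrictMonoOn (fun x : R => x ^ 2 + c * x) (Set.Ici 0) := by
  intro x (hx : 0 ≤ x) y _ hxy
  nlinarith [mul_pos (sub_pos.2 hxy) (show 0 < y + x + c by linarith)]

theorem casimirSum_const_half (n : ℕ) :
    casimirSum n (fun _ => 1 / 2) = (n : ℝ) * (2 * (n : ℝ) - 1) / 4 := by
  have hgauss : ∑ i : Fin n, ((i : ℕ) : ℝ) = n * (n - 1) / 2 := by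
    induction n with
    | zero => simp
    | succ m ih =>
      rw [Fin.sum_univ_castSucc]
      simp only [Fin.val_castSucc, Fin.val_last, ih]
      push_cast
      ring
  simp only [casimirSum, casimirWeight, sum_add_distrib, ← sum_mul, sum_sub_distrib,
    ← mul_sum, sum_const, card_univ, Fintype.card_fin, nsmul_eq_mul, hgauss]
  ring

section

variable {n : ℕ}

theorem casimirWeight_nonneg (i : Fin n) : 0 ≤ casimirWeight n i := by
  have : ((i : ℕ) : ℝ) + 1 ≤ n := by exact_mod_cast i.isLt
  unfold casimirWeight
  linarith

theorem casimirSum_mono {lam mu : Fin n → ℝ} (h0 : 0 ≤ lam) (h : lam ≤ mu) :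
    casimirSum n lam ≤ casimirSum n mu :=
  sum_le_sum fun i _ => (strictMonoOn_sq_add_mul (casimirWeight_nonneg i)).monotoneOn
    (h0 i) ((h0 i).trans (h i)) (h i)

theorem casimirSum_standardPartition (hn : 0 < n) :
    casimirSum n (standardPartition n) = 2 * (n : ℝ) - 1 := by
  rw [casimirSum, Fintype.sum_eq_single ⟨0, hn⟩ fun i hi => ?_]
  · simp [standardPartition, casimirWeight]
    ring
  · simp [standardPartition, Fin.ext_iff.not.mp hi]

theorem casimirSum_const_half_le {lam : Fin n → ℝ} (hhalf : ∀ i, ∃ m : ℕ, lam i = (m : ℝ) + 1 / 2) :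
    casimirSum n (fun _ => 1 / 2) ≤ casimirSum n lam :=
  casimirSum_mono (fun _ => by norm_num) fun i => by
    obtain ⟨m, hm⟩ := hhalf i
    simp [hm]

theorem one_le_of_nat_of_antitone {lam : Fin n → ℝ} (hanti : Antitone lam)
    (hint : ∀ i, ∃ m : ℕ, lam i = m) (hne : lam ≠ 0) {i₀ : Fin n} (hi₀ : (i₀ : ℕ) = 0) :
    1 ≤ lam i₀ := by
  obtain ⟨j, hj⟩ := Function.ne_iff.mp hne
  obtain ⟨m, hm⟩ := hint j
  have hm₁ : 1 ≤ m := Nat.one_le_iff_ne_zero.2 fun h => hj (by simp [hm, h])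
  calc (1 : ℝ) ≤ m := by exact_mod_cast hm₁
    _ = lam j := hm.symm
    _ ≤ lam i₀ := hanti (Fin.le_iff_val_le_val.2 (hi₀ ▸ Nat.zero_le _))

theorem two_mul_sub_one_le_casimirSum_of_nat {lam : Fin n → ℝ} (hanti : Antitone lam)
    (hint : ∀ i, ∃ m : ℕ, lam i = m) (hne : lam ≠ 0) :
    2 * (n : ℝ) - 1 ≤ casimirSum n lam ∧
      (casimirSum n lam = 2 * (n : ℝ) - 1 → lam = standardPartition n) := by
  obtain ⟨i₀, hi₀⟩ : ∃ i₀ : Fin n, (i₀ : ℕ) = 0 := by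
    obtain ⟨j, -⟩ := Function.ne_iff.mp hne
    exact ⟨⟨0, j.pos⟩, rfl⟩
  have hnonneg : ∀ i, 0 ≤ lam i := fun i => by
    obtain ⟨m, hm⟩ := hint i
    exact hm ▸ m.cast_nonneg
  have hone : 1 ≤ lam i₀ := one_le_of_nat_of_antitone hanti hint hne hi₀
  set t : Fin n → ℝ := fun i => lam i ^ 2 + casimirWeight n i * lam i
  have hmono : ∀ i, StrictMonoOn (fun x : ℝ => x ^ 2 + casimirWeight n i * x) (Set.Ici 0) :=
    fun i => strictMonoOn_sq_add_mul (casimirWeight_nonneg i)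
  have ht_nonneg : ∀ i, 0 ≤ t i := fun i => by
    simpa using (hmono i).monotoneOn Set.self_mem_Ici (hnonneg i) (hnonneg i)
  have hrest_nonneg : 0 ≤ ∑ i ∈ univ.erase i₀, t i := sum_nonneg fun i _ => ht_nonneg i
  have hsplit : casimirSum n lam = t i₀ + ∑ i ∈ univ.erase i₀, t i :=
    (add_sum_erase _ _ (mem_univ i₀)).symm
  have hval₀ : 2 * (n : ℝ) - 1 = 1 ^ 2 + casimirWeight n i₀ * 1 := by
    simp only [casimirWeight, hi₀]
    ring
  have hle₀ : 2 * (n : ℝ) - 1 ≤ t i₀ :=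
    hval₀ ▸ (hmono i₀).monotoneOn (Set.mem_Ici.2 zero_le_one) (hnonneg i₀) hone
  refine ⟨by linarith, fun heq => funext fun i => ?_⟩
  by_cases hi : (i : ℕ) = 0
  · obtain rfl : i = i₀ := Fin.ext (hi.trans hi₀.symm)
    simp only [standardPartition, hi, if_true]
    have ht₀ : t i = 1 ^ 2 + casimirWeight n i * 1 := by linarith
    exact (hmono i).injOn (hnonneg i) (Set.mem_Ici.2 zero_le_one) ht₀
  · have hrest : ∑ i ∈ univ.erase i₀, t i = 0 := by linarith
    have hti : t i = 0 := (sum_eq_zero_iff_of_nonneg fun i _ => ht_nonneg i).1 hrest i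
      (mem_erase.2 ⟨fun h => hi (h ▸ hi₀), mem_univ i⟩)
    simp only [standardPartition, hi, if_false]
    exact (hmono i).injOn (hnonneg i) Set.self_mem_Ici (by simpa [t] using hti)

end

/-- For `n ≥ 5` and `λ` either a nonzero integer partition of length `n` or a half-partition
of length `n`, one has `∑_{i=1}^n (λ_i² + (2n-2i)·λ_i) ≥ 2n-1`, with equality iff
`λ = (1,0,…,0)`. Moreover the half-partition `(1/2,…,1/2)` gives the value `n(2n-1)/4`,
which is strictly larger than `2n-1` for `n ≥ 5`. -/
theorem statement3 (n : ℕ) (hn : 5 ≤ n) (lam : Fin n → ℝ) (hanti : Antitone lam)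
    (hlam : ((∀ i, ∃ m : ℕ, lam i = m) ∧ lam ≠ 0) ∨
      (∀ i, ∃ m : ℕ, lam i = (m : ℝ) + 1 / 2)) :
    (2 * (n : ℝ) - 1 ≤
      ∑ i : Fin n, (lam i ^ 2 + (2 * (n : ℝ) - 2 * (((i : ℕ) : ℝ) + 1)) * lam i)) ∧
    ((∑ i : Fin n, (lam i ^ 2 + (2 * (n : ℝ) - 2 * (((i : ℕ) : ℝ) + 1)) * lam i) =
        2 * (n : ℝ) - 1) ↔
      lam = fun i : Fin n => if (i : ℕ) = 0 then 1 else 0) ∧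
    (∑ i : Fin n, ((1 / 2 : ℝ) ^ 2 + (2 * (n : ℝ) - 2 * (((i : ℕ) : ℝ) + 1)) * (1 / 2)) =
      (n : ℝ) * (2 * (n : ℝ) - 1) / 4) ∧
    2 * (n : ℝ) - 1 < (n : ℝ) * (2 * (n : ℝ) - 1) / 4 := by
  have hhalf_gt : 2 * (n : ℝ) - 1 < (n : ℝ) * (2 * (n : ℝ) - 1) / 4 := by
    have : (5 : ℝ) ≤ n := by exact_mod_cast hn
    nlinarith
  have key : 2 * (n : ℝ) - 1 ≤ casimirSum n lam ∧
      (casimirSum n lam = 2 * (n : ℝ) - 1 → lam = standardPartition n) := by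
    rcases hlam with ⟨hint, hne⟩ | hhalf
    · exact two_mul_sub_one_le_casimirSum_of_nat hanti hint hne
    · have hlt : 2 * (n : ℝ) - 1 < casimirSum n lam :=
        (casimirSum_const_half n ▸ hhalf_gt).trans_le (casimirSum_const_half_le hhalf)
      exact ⟨hlt.le, fun h => absurd h hlt.ne'⟩
  refine ⟨key.1, ⟨key.2, fun h => ?_⟩, casimirSum_const_half n, hhalf_gt⟩
  subst h
  exact casimirSum_standardPartition (by omega)
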